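/- The maximum-entropy distribution on 𝒞₃ subject only to E[f₁] = 3p₁ and E[f₂] = p₁³p₂ is P̃(C) = p₁^{f₁(C)}(1-p₁)^{3-f₁(C)} p₂^{f₂(C)} (1-p₁²p₂)^{f₁(C)-3f₂(C)} (1-p₁³p₂)^{2f₂(C)-2}, and this distribution differs from the Kahle distribution P_Δ(C) = p₁^{f₁(C)}(1-p₁)^{3-f₁(C)} p₂^{f₂(C)}(1-p₂)^{φ₂(C)-f₂(C)} for generic p₁, p₂ ∈ (0,1) (e.g., there exists a complex C with P̃(C) ≠ P_Δ(C) whenever 0 < p₁ < 1 and 0 < p₂ < 1). -/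

import Mathlib

open Finset

/-- The set `𝒞₃` of simplicial complexes on vertex set `{1,2,3}` (containing all vertices). -/
def C3 := {c : Bool × Bool × Bool × Bool // c.2.2.2 = true → (c.1 && c.2.1 && c.2.2.1) = true}

instance : Fintype C3 := by unfold C3; infer_instance

instance : DecidableEq C3 := by unfold C3; infer_instance

/-- Number of edges. -/
def f1 (C : C3) : ℕ :=
  (if C.1.1 then 1 else 0) + (if C.1.2.1 then 1 else 0) + (if C.1.2.2.1 then 1 else 0)

/-- Indicator of the 2-simplex. -/
def f2 (C : C3) : ℕ := if C.1.2.2.2 then 1 else 0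

/-- Indicator that all three edges are present. -/
def phi2 (C : C3) : ℕ := if C.1.1 && C.1.2.1 && C.1.2.2.1 then 1 else 0

/-- The Kahle distribution `P_Δ` on `𝒞₃`. -/
def PDelta (p₁ p₂ : ℝ) (C : C3) : ℝ :=
  p₁ ^ f1 C * (1 - p₁) ^ (3 - f1 C) * p₂ ^ f2 C * (1 - p₂) ^ (phi2 C - f2 C)

/-- The maximum-entropy distribution on `𝒞₃` under only the two constraints `E[f₁] = 3p₁`
and `E[f₂] = p₁³p₂`:
`P̃(C) = p₁^{f₁}(1-p₁)^{3-f₁} p₂^{f₂} (1-p₁²p₂)^{f₁-3f₂} (1-p₁³p₂)^{2f₂-2}`. -/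
noncomputable def PTilde (p₁ p₂ : ℝ) (C : C3) : ℝ :=
  p₁ ^ f1 C * (1 - p₁) ^ (3 - f1 C) * p₂ ^ f2 C *
    (1 - p₁ ^ 2 * p₂) ^ ((f1 C : ℤ) - 3 * (f2 C : ℤ)) *
    (1 - p₁ ^ 3 * p₂) ^ (2 * (f2 C : ℤ) - 2)

/-! `log P̃` is an affine function of `(f₁, f₂)`, so the cross-entropy `-∑ P log P̃` is the same
for every `P` with the prescribed moments, namely the entropy of `P̃`. Gibbs' inequality
`-∑ P log P ≤ -∑ P log P̃`, with equality only at `P = P̃` (a sum of nonnegative terms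
`P̃ · klFun (P / P̃)`), then makes `P̃` the unique maximizer. The two distributions already differ
at the empty complex: `P̃ = (1-p₁)³ / (1-p₁³p₂)²` there, while `P_Δ = (1-p₁)³`. -/

open Real InformationTheory

section MaximumEntropy

variable {α : Type*} [Fintype α] {P Q : α → ℝ}

lemma mul_klFun_div_eq (p : ℝ) {q : ℝ} (hq : 0 < q) :
    q * klFun (p / q) = p * log p - p * log q + q - p := by
  rcases eq_or_ne p 0 with rfl | hp
  · simp [klFun_zero]
  · rw [klFun_apply, log_div hp hq.ne']
    field_simp

lemma sum_mul_klFun_div_eq (hQ : ∀ x, 0 < Q x) (hPQ : ∑ x, P x = ∑ x, Q x) :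
    ∑ x, Q x * klFun (P x / Q x) = ∑ x, P x * log (P x) - ∑ x, P x * log (Q x) := by
  simp only [mul_klFun_div_eq _ (hQ _), sum_sub_distrib, sum_add_distrib, hPQ]
  ring

lemma sum_mul_log_le_sum_mul_log (hP : ∀ x, 0 ≤ P x) (hQ : ∀ x, 0 < Q x)
    (hPQ : ∑ x, P x = ∑ x, Q x) :
    ∑ x, P x * log (Q x) ≤ ∑ x, P x * log (P x) := by
  have := sum_nonneg fun x (_ : x ∈ univ) =>
    mul_nonneg (hQ x).le (klFun_nonneg (div_nonneg (hP x) (hQ x).le))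
  rw [sum_mul_klFun_div_eq hQ hPQ] at this
  linarith

lemma sum_mul_log_eq_sum_mul_log_iff (hP : ∀ x, 0 ≤ P x) (hQ : ∀ x, 0 < Q x)
    (hPQ : ∑ x, P x = ∑ x, Q x) :
    ∑ x, P x * log (Q x) = ∑ x, P x * log (P x) ↔ P = Q := by
  have hkl : ∀ x, 0 ≤ Q x * klFun (P x / Q x) := fun x =>
    mul_nonneg (hQ x).le (klFun_nonneg (div_nonneg (hP x) (hQ x).le))
  rw [eq_comm, ← sub_eq_zero, ← sum_mul_klFun_div_eq hQ hPQ,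
    sum_eq_zero_iff_of_nonneg fun x _ => hkl x, funext_iff]
  refine forall_congr' fun x => ?_
  rw [mul_eq_zero, or_iff_right (hQ x).ne', klFun_eq_zero_iff (div_nonneg (hP x) (hQ x).le),
    div_eq_one_iff_eq (hQ x).ne']
  simp only [mem_univ, true_implies]

lemma sum_mul_log_eq_of_log_eq_affine {ι : Type*} [Fintype ι] (f : ι → α → ℝ) (a : ℝ)
    (θ : ι → ℝ) (hlog : ∀ x, log (Q x) = a + ∑ i, θ i * f i x)
    (hPQ : ∑ x, P x = ∑ x, Q x) (hf : ∀ i, ∑ x, f i x * P x = ∑ x, f i x * Q x) :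
    ∑ x, P x * log (Q x) = ∑ x, Q x * log (Q x) := by
  have expand : ∀ R : α → ℝ,
      ∑ x, R x * log (Q x) = a * ∑ x, R x + ∑ i, θ i * ∑ x, f i x * R x := by
    intro R
    simp only [hlog, mul_add, sum_add_distrib, mul_sum]
    rw [sum_comm]
    congr 1
    · exact sum_congr rfl fun _ _ => mul_comm _ _
    · exact sum_congr rfl fun _ _ => sum_congr rfl fun _ _ => by ring
  rw [expand P, expand Q, hPQ]
  simp only [hf]

theorem entropy_le_and_eq_iff_of_log_eq_affine {ι : Type*} [Fintype ι] (f : ι → α → ℝ)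
    (a : ℝ) (θ : ι → ℝ) (hQ : ∀ x, 0 < Q x) (hlog : ∀ x, log (Q x) = a + ∑ i, θ i * f i x)
    (hP : ∀ x, 0 ≤ P x) (hPQ : ∑ x, P x = ∑ x, Q x)
    (hf : ∀ i, ∑ x, f i x * P x = ∑ x, f i x * Q x) :
    -∑ x, P x * log (P x) ≤ -∑ x, Q x * log (Q x) ∧
      (-∑ x, P x * log (P x) = -∑ x, Q x * log (Q x) ↔ P = Q) := by
  have hcross := sum_mul_log_eq_of_log_eq_affine f a θ hlog hPQ hf
  refine ⟨?_, ?_⟩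
  · linarith [sum_mul_log_le_sum_mul_log hP hQ hPQ]
  · rw [← sum_mul_log_eq_sum_mul_log_iff hP hQ hPQ, hcross, neg_inj, eq_comm]

end MaximumEntropy

lemma sum_C3 (g : C3 → ℝ) : ∑ C : C3, g C =
    g ⟨(false,false,false,false), by decide⟩ + g ⟨(true,false,false,false), by decide⟩ +
    g ⟨(false,true,false,false), by decide⟩ + g ⟨(false,false,true,false), by decide⟩ +
    g ⟨(true,true,false,false), by decide⟩ + g ⟨(true,false,true,false), by decide⟩ +
    g ⟨(false,true,true,false), by decide⟩ + g ⟨(true,true,true,false), by decide⟩ +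
    g ⟨(true,true,true,true), by decide⟩ := by
  rw [show (univ : Finset C3) =
    {⟨(false,false,false,false), by decide⟩, ⟨(true,false,false,false), by decide⟩,
     ⟨(false,true,false,false), by decide⟩, ⟨(false,false,true,false), by decide⟩,
     ⟨(true,true,false,false), by decide⟩, ⟨(true,false,true,false), by decide⟩,
     ⟨(false,true,true,false), by decide⟩, ⟨(true,true,true,false), by decide⟩,
     ⟨(true,true,true,true), by decide⟩} from by decide]
  unfold C3 at g ⊢
  rw [sum_insert (by decide), sum_insert (by decide), sum_insert (by decide),
      sum_insert (by decide), sum_insert (by decide), sum_insert (by decide),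
      sum_insert (by decide), sum_insert (by decide), sum_singleton]
  ring

lemma f1_le_three (C : C3) : f1 C ≤ 3 := by
  unfold f1; split_ifs <;> omega

section PTilde

variable {p₁ p₂ : ℝ}

lemma one_sub_pow_mul_pos (hp₁ : p₁ ∈ Set.Ioo 0 1) (hp₂ : p₂ ∈ Set.Ioo 0 1) (n : ℕ) :
    0 < 1 - p₁ ^ n * p₂ :=
  sub_pos.2 ((mul_le_of_le_one_left hp₂.1.le (pow_le_one₀ hp₁.1.le hp₁.2.le)).trans_lt hp₂.2)

lemma PTilde_pos (hp₁ : p₁ ∈ Set.Ioo 0 1) (hp₂ : p₂ ∈ Set.Ioo 0 1) (C : C3) :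
    0 < PTilde p₁ p₂ C := by
  have h₁ : 0 < 1 - p₁ := sub_pos.2 hp₁.2
  have h₂ := one_sub_pow_mul_pos hp₁ hp₂ 2
  have h₃ := one_sub_pow_mul_pos hp₁ hp₂ 3
  have := pow_pos hp₁.1 (f1 C)
  have := pow_pos hp₂.1 (f2 C)
  unfold PTilde
  positivity

lemma log_PTilde (hp₁ : p₁ ∈ Set.Ioo 0 1) (hp₂ : p₂ ∈ Set.Ioo 0 1) (C : C3) :
    log (PTilde p₁ p₂ C) =
      (3 * log (1 - p₁) - 2 * log (1 - p₁ ^ 3 * p₂))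
      + (log p₁ - log (1 - p₁) + log (1 - p₁ ^ 2 * p₂)) * f1 C
      + (log p₂ - 3 * log (1 - p₁ ^ 2 * p₂) + 2 * log (1 - p₁ ^ 3 * p₂)) * f2 C := by
  have h₁ : 0 < 1 - p₁ := sub_pos.2 hp₁.2
  have h₂ := one_sub_pow_mul_pos hp₁ hp₂ 2
  have h₃ := one_sub_pow_mul_pos hp₁ hp₂ 3
  have hp₁' := pow_pos hp₁.1 (f1 C)
  have hp₂' := pow_pos hp₂.1 (f2 C)
  unfold PTilde
  rw [log_mul (by positivity) (by positivity), log_mul (by positivity) (by positivity),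
    log_mul (by positivity) (by positivity), log_mul (by positivity) (by positivity),
    log_pow, log_pow, log_pow, log_zpow, log_zpow, Nat.cast_sub (f1_le_three C)]
  push_cast
  ring

-- The triangle-free complexes are the `2³` edge sets, and for them the binomial theorem gives
-- `∑ p₁^{f₁}(1-p₁)^{3-f₁}(1-p₁²p₂)^{f₁} = (1-p₁³p₂)³`.
lemma sum_PTilde (h : 1 - p₁ ^ 3 * p₂ ≠ 0) : ∑ C, PTilde p₁ p₂ C = 1 := by
  rw [sum_C3]
  norm_num [PTilde, f1, f2]
  field_simp
  ring

lemma sum_f1_mul_PTilde (h : 1 - p₁ ^ 3 * p₂ ≠ 0) :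
    ∑ C, (f1 C : ℝ) * PTilde p₁ p₂ C = 3 * p₁ := by
  rw [sum_C3]
  norm_num [PTilde, f1, f2]
  field_simp
  ring

lemma sum_f2_mul_PTilde : ∑ C, (f2 C : ℝ) * PTilde p₁ p₂ C = p₁ ^ 3 * p₂ := by
  rw [sum_C3]
  norm_num [PTilde, f1, f2]

lemma PTilde_empty_ne_PDelta_empty (hp₁ : p₁ ∈ Set.Ioo 0 1) (hp₂ : p₂ ∈ Set.Ioo 0 1) :
    PTilde p₁ p₂ ⟨(false, false, false, false), by decide⟩ ≠
      PDelta p₁ p₂ ⟨(false, false, false, false), by decide⟩ := by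
  have hTilde : PTilde p₁ p₂ ⟨(false, false, false, false), by decide⟩ =
      (1 - p₁) ^ 3 * ((1 - p₁ ^ 3 * p₂) ^ 2)⁻¹ := by
    norm_num [PTilde, f1, f2]
  have hDelta : PDelta p₁ p₂ ⟨(false, false, false, false), by decide⟩ = (1 - p₁) ^ 3 := by
    norm_num [PDelta, f1, f2, phi2]
  have hpos : 0 < p₁ ^ 3 * p₂ := mul_pos (pow_pos hp₁.1 3) hp₂.1
  have hlt := one_sub_pow_mul_pos hp₁ hp₂ 3
  rw [hTilde, hDelta, ne_eq, mul_eq_left₀ (pow_ne_zero 3 (sub_ne_zero.2 hp₁.2.ne')), inv_eq_one,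
    pow_eq_one_iff_of_nonneg (by linarith) two_ne_zero]
  linarith

end PTilde

/-- `P̃` is a probability distribution satisfying `E[f₁]=3p₁` and `E[f₂]=p₁³p₂`; it is the
unique entropy maximizer on `𝒞₃` under these two constraints; and it differs from the Kahle
distribution `P_Δ`. -/
theorem two_constraint_maximum_entropy_differs_from_kahle
    (p₁ p₂ : ℝ) (hp₁ : p₁ ∈ Set.Ioo (0 : ℝ) 1) (hp₂ : p₂ ∈ Set.Ioo (0 : ℝ) 1) :
    (∀ C, 0 ≤ PTilde p₁ p₂ C) ∧ (∑ C : C3, PTilde p₁ p₂ C = 1) ∧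
    (∑ C : C3, (f1 C : ℝ) * PTilde p₁ p₂ C = 3 * p₁) ∧
    (∑ C : C3, (f2 C : ℝ) * PTilde p₁ p₂ C = p₁ ^ 3 * p₂) ∧
    (∀ P : C3 → ℝ, (∀ C, 0 ≤ P C) → (∑ C, P C = 1) →
      (∑ C, (f1 C : ℝ) * P C = 3 * p₁) →
      (∑ C, (f2 C : ℝ) * P C = p₁ ^ 3 * p₂) →
      (-∑ C, P C * Real.log (P C)) ≤
          (-∑ C, PTilde p₁ p₂ C * Real.log (PTilde p₁ p₂ C)) ∧
      ((-∑ C, P C * Real.log (P C)) =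
          (-∑ C, PTilde p₁ p₂ C * Real.log (PTilde p₁ p₂ C)) ↔ P = PTilde p₁ p₂)) ∧
    (∃ C : C3, PTilde p₁ p₂ C ≠ PDelta p₁ p₂ C) := by
  have hmass := sum_PTilde (one_sub_pow_mul_pos hp₁ hp₂ 3).ne'
  have hf1 := sum_f1_mul_PTilde (one_sub_pow_mul_pos hp₁ hp₂ 3).ne'
  refine ⟨fun C => (PTilde_pos hp₁ hp₂ C).le, hmass, hf1, sum_f2_mul_PTilde,
    fun P hP hPmass hPf1 hPf2 => ?_, ⟨_, PTilde_empty_ne_PDelta_empty hp₁ hp₂⟩⟩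
  exact entropy_le_and_eq_iff_of_log_eq_affine ![fun C => (f1 C : ℝ), fun C => (f2 C : ℝ)] _
    ![_, _] (PTilde_pos hp₁ hp₂)
    (fun C => by rw [log_PTilde hp₁ hp₂ C, Fin.sum_univ_two, ← add_assoc]; rfl)
    hP (hPmass.trans hmass.symm)
    (Fin.forall_fin_two.2
      ⟨by simpa [hPf1] using hf1.symm, by simpa [hPf2] using sum_f2_mul_PTilde.symm⟩)
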